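/- A^λ is an Artinian graded A-module if and only if χ_λ is finite, and A^λ is a simple graded A-module if and only if χ_λ = ∅ (equivalently, λ does not lie in Z^σ). -/

import Mathlib

/-!
Write `x` for the generator of `A^λ` and `x_n = t_n x`, where `t_n = t₊ⁿ` for `n ≥ 0` and
`t_n = t₋⁻ⁿ` for `n < 0`. Every element of degree `n` is some `r x_n`, and `r x_n = 0` iff
`σⁿ(r) ∈ λ`, because the `t_n`-coefficient of any element of `Aλ` lies in `σ⁻ⁿ(λ)`. As `λ` is
maximal, a nonzero homogeneous element of a submodule `N` forces `x_n ∈ N`, so a graded submodule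
is determined by the degrees `n` with `x_n ∈ N`.

Moving away from degree `0` is free, while moving back towards `0` multiplies by the `σʲ(v)` of
the degrees passed: `t₋ᵃ t₊ᵇ⁺ᵃ = t₊ᵇ ∏_{b<j≤b+a} σʲ(v)` and `t₊ᵃ t₋ᵇ⁺ᵃ = t₋ᵇ ∏_{b≤j<b+a} σ⁻ʲ(v)`.
Hence if `χ_λ = ∅` every nonzero graded submodule contains `x_0 = x`; a point `k ∈ χ_λ` makes
`A x_k` (or `A x_{k-1}` when `k ≤ 0`) a proper nonzero graded submodule; infinitely many points
give a strictly descending chain of such submodules; and if `χ_λ ⊆ (-K, K)`, a graded submodule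
is determined by which `x_n` with `|n| ≤ K` it contains, so descending chains stabilise.
-/

noncomputable section

/-- A realization of the generalized Weyl algebra `T(R,σ,v)`:
a `ℤ`-graded `ℂ`-algebra `A` containing `R` in degree `0`, with elements
`t₊` of degree `1` and `t₋` of degree `-1` satisfying the GWA relations, such that each
homogeneous component `A_n` is free of rank one as a left `R`-module with basis
`t₊^n` (for `n ≥ 0`) resp. `t₋^{-n}` (for `n ≤ 0`). -/
structure GWA (R : Type) [CommRing R] [Algebra ℂ R] (σ : R ≃ₐ[ℂ] R) (v : R) : Type 1 where
  A : Type
  [ringA : Ring A]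
  [algA : Algebra ℂ A]
  emb : R →ₐ[ℂ] A
  tp : A
  tm : A
  rel1 : ∀ r : R, emb r * tp = tp * emb (σ r)
  rel2 : ∀ r : R, emb (σ r) * tm = tm * emb r
  rel3 : tm * tp = emb (σ v)
  rel4 : tp * tm = emb v
  deg : ℤ → AddSubgroup A
  algmap_mem : ∀ c : ℂ, algebraMap ℂ A c ∈ deg 0
  emb_mem : ∀ r : R, emb r ∈ deg 0
  tp_mem : tp ∈ deg 1
  tm_mem : tm ∈ deg (-1)
  mul_mem : ∀ {i j : ℤ} {a b : A}, a ∈ deg i → b ∈ deg j → a * b ∈ deg (i + j)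
  decomp : ∀ a : A, ∃ (s : Finset ℤ) (g : ℤ → A), (∀ i, g i ∈ deg i) ∧ a = ∑ i ∈ s, g i
  indep : ∀ (s : Finset ℤ) (g : ℤ → A), (∀ i, g i ∈ deg i) → (∑ i ∈ s, g i) = 0 →
    ∀ i ∈ s, g i = 0
  free_pos : ∀ n : ℕ, ∀ a ∈ deg (n : ℤ), ∃! r : R, a = emb r * tp ^ n
  free_neg : ∀ n : ℕ, ∀ a ∈ deg (-(n : ℤ)), ∃! r : R, a = emb r * tm ^ n

attribute [instance] GWA.ringA GWA.algA

variable {R : Type} [CommRing R] [Algebra ℂ R] {σ : R ≃ₐ[ℂ] R} {v : R}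

/-- A `ℤ`-graded left module over (a realization of) a generalized Weyl algebra. -/
structure GradedMod (G : GWA R σ v) : Type 1 where
  M : Type
  [acg : AddCommGroup M]
  [mod : Module G.A M]
  deg : ℤ → AddSubgroup M
  smul_mem : ∀ {i j : ℤ} {a : G.A} {m : M}, a ∈ G.deg i → m ∈ deg j → a • m ∈ deg (i + j)
  decomp : ∀ m : M, ∃ (s : Finset ℤ) (g : ℤ → M), (∀ i, g i ∈ deg i) ∧ m = ∑ i ∈ s, g i
  indep : ∀ (s : Finset ℤ) (g : ℤ → M), (∀ i, g i ∈ deg i) → (∑ i ∈ s, g i) = 0 →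
    ∀ i ∈ s, g i = 0

attribute [instance] GradedMod.acg GradedMod.mod

variable {G : GWA R σ v}

/-- A homomorphism of graded modules that shifts degrees by `n`, i.e. an element of
`Hom_gr(X, Y[n])`. -/
structure GHom (X Y : GradedMod G) (n : ℤ) : Type where
  toLin : X.M →ₗ[G.A] Y.M
  map_deg : ∀ i : ℤ, ∀ m ∈ X.deg i, toLin m ∈ Y.deg (i + n)

/-- `X` is isomorphic to `Y[n]` as a graded module. -/
def GIso (X Y : GradedMod G) (n : ℤ) : Prop :=
  ∃ f : GHom X Y n, Function.Bijective f.toLin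

/-- A submodule is graded if every element of it is a sum of homogeneous elements of it. -/
def IsGradedSub (X : GradedMod G) (N : Submodule G.A X.M) : Prop :=
  ∀ m ∈ N, ∃ (s : Finset ℤ) (g : ℤ → X.M),
    (∀ i, g i ∈ X.deg i) ∧ (∀ i, g i ∈ N) ∧ m = ∑ i ∈ s, g i

/-- `χ_λ = {k ∈ ℤ : σ^k(v) ∈ λ}`. -/
def chiSet (σ : R ≃ₐ[ℂ] R) (v : R) (lam : Ideal R) : Set ℤ := {k : ℤ | (σ ^ k) v ∈ lam}

/-- `X` is (a realization of) the graded module `A^λ = A/Aλ`: it is cyclic, generated by a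
degree-zero element whose annihilator is the left ideal generated by `λ`. -/
def IsStdMod (G : GWA R σ v) (lam : Ideal R) (X : GradedMod G) : Prop :=
  ∃ x ∈ X.deg 0, Submodule.span G.A {x} = ⊤ ∧
    ∀ a : G.A, a • x = 0 ↔ a ∈ Submodule.span G.A (G.emb '' (lam : Set R))

/-- A graded module is simple if it is nonzero and has no proper nontrivial graded submodules. -/
def IsSimpleGr (X : GradedMod G) : Prop :=
  (∃ m : X.M, m ≠ 0) ∧ ∀ N : Submodule G.A X.M, IsGradedSub X N → N = ⊥ ∨ N = ⊤

/-- Artinian graded module : the descending chain condition on graded submodules. -/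
def IsArtinianGr (X : GradedMod G) : Prop :=
  ∀ f : ℕ → Submodule G.A X.M, (∀ n, IsGradedSub X (f n)) →
    (∀ n, f (n + 1) ≤ f n) → ∃ n, ∀ m, n ≤ m → f m = f n

/-- `Y` is a graded subquotient of `X`. -/
def IsSubquotient (X Y : GradedMod G) : Prop :=
  ∃ (Q P : Submodule G.A X.M), IsGradedSub X Q ∧ IsGradedSub X P ∧ P ≤ Q ∧
    ∃ φ : Q →ₗ[G.A] Y.M, Function.Surjective φ ∧
      (∀ q : Q, φ q = 0 ↔ (q : X.M) ∈ P) ∧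
      (∀ (i : ℤ) (q : Q), (q : X.M) ∈ X.deg i → φ q ∈ Y.deg i)

open DirectSum

theorem isInternal_of_decomp {ι M : Type*} [DecidableEq ι] [AddCommGroup M]
    (deg : ι → AddSubgroup M)
    (decomp : ∀ m : M, ∃ (s : Finset ι) (g : ι → M), (∀ i, g i ∈ deg i) ∧ m = ∑ i ∈ s, g i)
    (indep : ∀ (s : Finset ι) (g : ι → M), (∀ i, g i ∈ deg i) → (∑ i ∈ s, g i) = 0 →
      ∀ i ∈ s, g i = 0) :
    IsInternal deg := by
  classical
  refine ⟨(injective_iff_map_eq_zero _).mpr fun y hy => ?_, fun m => ?_⟩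
  · rw [coeAddMonoidHom_eq_dfinsuppSum, DFinsupp.sum] at hy
    ext i
    by_contra hi
    exact hi (by simpa using indep _ (fun i => y i) (fun i => (y i).2) hy i (by simpa using hi))
  · obtain ⟨s, g, hg, rfl⟩ := decomp m
    exact ⟨∑ i ∈ s, of (fun i => deg i) i ⟨g i, hg i⟩, by simp⟩

theorem zpow_apply_zpow_neg_apply {S B : Type*} [CommSemiring S] [Semiring B] [Algebra S B]
    (τ : B ≃ₐ[S] B) (n : ℤ) (b : B) : (τ ^ n) ((τ ^ (-n)) b) = b := by
  simp

namespace GWA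

variable (G : GWA R σ v)

instance : Decomposition G.deg :=
  (isInternal_of_decomp G.deg G.decomp G.indep).chooseDecomposition

instance : SetLike.GradedMonoid G.deg where
  one_mem := by simpa using G.algmap_mem 1
  mul_mem _ _ _ _ := G.mul_mem

instance : GradedRing G.deg where

def tpow : ℤ → G.A
  | (n : ℕ) => G.tp ^ n
  | .negSucc n => G.tm ^ (n + 1)

@[simp]
theorem tpow_natCast (n : ℕ) : G.tpow n = G.tp ^ n := rfl

@[simp]
theorem tpow_neg_natCast (n : ℕ) : G.tpow (-n) = G.tm ^ n := by
  cases n with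
  | zero => simp [tpow]
  | succ n => rfl

theorem tpow_zero : G.tpow 0 = 1 := pow_zero _

theorem tpow_mem (n : ℤ) : G.tpow n ∈ G.deg n := by
  cases n with
  | ofNat n => simpa [tpow] using SetLike.pow_mem_graded n G.tp_mem
  | negSucc n => simpa [tpow, Int.negSucc_eq] using SetLike.pow_mem_graded (n + 1) G.tm_mem

theorem emb_mul_pow {t : G.A} {τ : R ≃ₐ[ℂ] R} (h : ∀ r, G.emb r * t = t * G.emb (τ r))
    (n : ℕ) (r : R) : G.emb r * t ^ n = t ^ n * G.emb ((τ ^ n) r) := by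
  induction n generalizing r with
  | zero => simp
  | succ n ih =>
    rw [pow_succ, ← mul_assoc, ih, mul_assoc, h, ← mul_assoc, pow_succ', AlgEquiv.mul_apply]

theorem emb_mul_tp_pow (n : ℕ) (r : R) :
    G.emb r * G.tp ^ n = G.tp ^ n * G.emb ((σ ^ (n : ℤ)) r) := by
  rw [zpow_natCast]
  exact G.emb_mul_pow G.rel1 n r

theorem emb_mul_tm_pow (n : ℕ) (r : R) :
    G.emb r * G.tm ^ n = G.tm ^ n * G.emb ((σ ^ (-(n : ℤ))) r) := by
  rw [zpow_neg, zpow_natCast, ← inv_pow]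
  exact G.emb_mul_pow (fun r => by simpa using G.rel2 (σ⁻¹ r)) n r

theorem emb_mul_tpow (n : ℤ) (r : R) : G.emb r * G.tpow n = G.tpow n * G.emb ((σ ^ n) r) := by
  obtain ⟨n, rfl | rfl⟩ := Int.eq_nat_or_neg n
  · exact G.emb_mul_tp_pow n r
  · rw [tpow_neg_natCast]; exact G.emb_mul_tm_pow n r

theorem tpow_mul_emb (n : ℤ) (r : R) :
    G.tpow n * G.emb r = G.emb ((σ ^ (-n)) r) * G.tpow n := by
  rw [emb_mul_tpow, zpow_apply_zpow_neg_apply]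

theorem tm_pow_mul_tp_pow (a b : ℕ) :
    G.tm ^ a * G.tp ^ (b + a) =
      G.tp ^ b * G.emb (∏ j ∈ Finset.Ioc b (b + a), (σ ^ (j : ℤ)) v) := by
  induction a with
  | zero => simp
  | succ a ih =>
    rw [← add_assoc, pow_succ, pow_succ', mul_assoc, ← mul_assoc G.tm, G.rel3, emb_mul_tp_pow,
      ← mul_assoc, ih, mul_assoc, ← map_mul, Finset.prod_Ioc_succ_top (by omega),
      ← AlgEquiv.mul_apply, ← zpow_add_one, Nat.cast_succ]

theorem tp_pow_mul_tm_pow (a b : ℕ) :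
    G.tp ^ a * G.tm ^ (b + a) =
      G.tm ^ b * G.emb (∏ j ∈ Finset.Ico b (b + a), (σ ^ (-(j : ℤ))) v) := by
  induction a with
  | zero => simp
  | succ a ih =>
    rw [← add_assoc, pow_succ, pow_succ', mul_assoc, ← mul_assoc G.tp, G.rel4, emb_mul_tm_pow,
      ← mul_assoc, ih, mul_assoc, ← map_mul, Finset.prod_Ico_succ_top (by omega)]

theorem existsUnique_emb_mul_tpow {n : ℤ} {a : G.A} (ha : a ∈ G.deg n) :
    ∃! r : R, a = G.emb r * G.tpow n := by
  obtain ⟨n, rfl | rfl⟩ := Int.eq_nat_or_neg n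
  · exact G.free_pos n a ha
  · rw [tpow_neg_natCast]; exact G.free_neg n a ha

def coeff (n : ℤ) (a : G.A) : R :=
  (G.existsUnique_emb_mul_tpow (decompose G.deg a n).2).exists.choose

theorem decompose_eq_emb_coeff_mul_tpow (n : ℤ) (a : G.A) :
    (decompose G.deg a n : G.A) = G.emb (G.coeff n a) * G.tpow n :=
  (G.existsUnique_emb_mul_tpow (decompose G.deg a n).2).exists.choose_spec

theorem coeff_eq_of_decompose_eq {n : ℤ} {a : G.A} {r : R}
    (h : (decompose G.deg a n : G.A) = G.emb r * G.tpow n) : G.coeff n a = r :=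
  (G.existsUnique_emb_mul_tpow (decompose G.deg a n).2).unique
    (G.decompose_eq_emb_coeff_mul_tpow n a) h

theorem coeff_emb_mul_tpow (n : ℤ) (r : R) : G.coeff n (G.emb r * G.tpow n) = r := by
  apply coeff_eq_of_decompose_eq
  rw [decompose_of_mem_same]
  simpa using SetLike.GradedMul.mul_mem (G.emb_mem r) (G.tpow_mem n)

theorem coeff_zero (n : ℤ) : G.coeff n 0 = 0 := by
  simpa using G.coeff_emb_mul_tpow n 0

theorem coeff_add (n : ℤ) (a b : G.A) : G.coeff n (a + b) = G.coeff n a + G.coeff n b := by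
  apply coeff_eq_of_decompose_eq
  rw [decompose_add, DirectSum.add_apply, AddSubgroup.coe_add, decompose_eq_emb_coeff_mul_tpow,
    decompose_eq_emb_coeff_mul_tpow, map_add, add_mul]

theorem coeff_mul_emb (n : ℤ) (c : G.A) (l : R) :
    G.coeff n (c * G.emb l) = G.coeff n c * (σ ^ (-n)) l := by
  apply coeff_eq_of_decompose_eq
  rw [coe_decompose_mul_of_right_mem_zero G.deg (G.emb_mem l), decompose_eq_emb_coeff_mul_tpow,
    mul_assoc, tpow_mul_emb, ← mul_assoc, ← map_mul]

theorem zpow_coeff_mem_of_mem_span {lam : Ideal R} {a : G.A}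
    (ha : a ∈ Submodule.span G.A (G.emb '' (lam : Set R))) (n : ℤ) :
    (σ ^ n) (G.coeff n a) ∈ lam := by
  -- Quantifying over all left multiples makes the `smul` step of the span induction trivial.
  suffices ∀ c, (σ ^ n) (G.coeff n (c * a)) ∈ lam by simpa using this 1
  induction ha using Submodule.span_induction with
  | mem _ h =>
    obtain ⟨l, hl, rfl⟩ := h
    intro c
    rw [coeff_mul_emb, map_mul, zpow_apply_zpow_neg_apply]
    exact lam.mul_mem_left _ hl
  | zero => simp [coeff_zero]
  | add _ _ _ _ h₁ h₂ =>
    intro c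
    rw [mul_add, coeff_add, map_add]
    exact lam.add_mem (h₁ c) (h₂ c)
  | smul d _ _ h =>
    intro c
    rw [smul_eq_mul, ← mul_assoc]
    exact h (c * d)

theorem emb_mul_tpow_mem_span_iff (lam : Ideal R) (r : R) (n : ℤ) :
    G.emb r * G.tpow n ∈ Submodule.span G.A (G.emb '' (lam : Set R)) ↔ (σ ^ n) r ∈ lam := by
  refine ⟨fun h => by simpa [coeff_emb_mul_tpow] using G.zpow_coeff_mem_of_mem_span h n,
    fun h => ?_⟩
  rw [emb_mul_tpow]
  exact Submodule.smul_mem _ _ (Submodule.subset_span ⟨_, h, rfl⟩)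

end GWA

namespace GradedMod

variable (X : GradedMod G)

instance : Decomposition X.deg :=
  (isInternal_of_decomp X.deg X.decomp X.indep).chooseDecomposition

theorem decompose_smul_of_mem {k : ℤ} {y : X.M} (hy : y ∈ X.deg k) (a : G.A) (n : ℤ) :
    (decompose X.deg (a • y) n : X.M) = (decompose G.deg a (n - k) : G.A) • y := by
  induction a using Decomposition.inductionOn G.deg with
  | zero => simp
  | @homogeneous i a =>
    have hay := X.smul_mem a.2 hy
    by_cases h : i + k = n
    · subst h
      rw [decompose_of_mem_same _ hay, add_sub_cancel_right, decompose_of_mem_same _ a.2]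
    · rw [decompose_of_mem_ne _ hay h, decompose_of_mem_ne _ a.2 (by omega), zero_smul]
  | add a b ha hb => simp [add_smul, ha, hb]

theorem isGradedSub_of_decompose_mem {N : Submodule G.A X.M}
    (h : ∀ m ∈ N, ∀ i, (decompose X.deg m i : X.M) ∈ N) : IsGradedSub X N := by
  classical
  exact fun m hm => ⟨_, fun i => decompose X.deg m i, fun i => (decompose X.deg m i).2,
    fun i => h m hm i, (sum_support_decompose X.deg m).symm⟩

theorem isGradedSub_span_singleton {k : ℤ} {y : X.M} (hy : y ∈ X.deg k) :
    IsGradedSub X (Submodule.span G.A {y}) := by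
  refine X.isGradedSub_of_decompose_mem fun m hm i => ?_
  obtain ⟨a, rfl⟩ := Submodule.mem_span_singleton.mp hm
  rw [X.decompose_smul_of_mem hy]
  exact Submodule.smul_mem _ _ (Submodule.mem_span_singleton_self y)

variable {X}

theorem not_isSimpleGr_of_span_singleton_ne_top {n : ℤ} {y : X.M} (hy : y ∈ X.deg n)
    (hy0 : y ≠ 0) (hN : Submodule.span G.A {y} ≠ ⊤) : ¬ IsSimpleGr X := fun h =>
  (h.2 _ (X.isGradedSub_span_singleton hy)).elim
    (fun h => hy0 (Submodule.span_singleton_eq_bot.mp h)) hN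

theorem not_isArtinianGr_of_strictAnti {f : ℕ → Submodule G.A X.M}
    (hf : ∀ n, IsGradedSub X (f n)) (hanti : StrictAnti f) : ¬ IsArtinianGr X := fun h => by
  obtain ⟨n, hn⟩ := h f hf fun n => (hanti n.lt_succ_self).le
  exact (hanti n.lt_succ_self).ne (hn (n + 1) n.le_succ)

end GradedMod

structure IsStdGenerator (lam : Ideal R) (X : GradedMod G) (x : X.M) : Prop where
  mem_deg_zero : x ∈ X.deg 0
  span_eq_top : Submodule.span G.A {x} = ⊤
  smul_eq_zero_iff : ∀ a : G.A, a • x = 0 ↔ a ∈ Submodule.span G.A (G.emb '' (lam : Set R))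

namespace IsStdGenerator

variable {lam : Ideal R} {X : GradedMod G} {x : X.M}

theorem tpow_smul_mem (hx : IsStdGenerator lam X x) (n : ℤ) : G.tpow n • x ∈ X.deg n := by
  simpa using X.smul_mem (G.tpow_mem n) hx.mem_deg_zero

theorem tp_pow_smul_mem (hx : IsStdGenerator lam X x) (n : ℕ) : G.tp ^ n • x ∈ X.deg n :=
  hx.tpow_smul_mem n

theorem tm_pow_smul_mem (hx : IsStdGenerator lam X x) (n : ℕ) :
    G.tm ^ n • x ∈ X.deg (-n) := by
  simpa using hx.tpow_smul_mem (-n)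

theorem exists_eq_emb_smul_tpow_smul (hx : IsStdGenerator lam X x) {n : ℤ} {m : X.M}
    (hm : m ∈ X.deg n) : ∃ r : R, m = G.emb r • G.tpow n • x := by
  obtain ⟨a, rfl⟩ := Submodule.mem_span_singleton.mp (hx.span_eq_top ▸ Submodule.mem_top (x := m))
  refine ⟨G.coeff n a, ?_⟩
  rw [← decompose_of_mem_same X.deg hm, X.decompose_smul_of_mem hx.mem_deg_zero, sub_zero,
    G.decompose_eq_emb_coeff_mul_tpow, mul_smul]

theorem emb_smul_tpow_smul_eq_zero_iff (hx : IsStdGenerator lam X x) (r : R) (n : ℤ) :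
    G.emb r • G.tpow n • x = 0 ↔ (σ ^ n) r ∈ lam := by
  rw [← mul_smul, hx.smul_eq_zero_iff, G.emb_mul_tpow_mem_span_iff]

theorem tpow_smul_ne_zero (hx : IsStdGenerator lam X x) (hlam : lam ≠ ⊤) (n : ℤ) :
    G.tpow n • x ≠ 0 := by
  simpa using (hx.emb_smul_tpow_smul_eq_zero_iff 1 n).not.mpr
    (by rwa [map_one, ← Ideal.eq_top_iff_one])

theorem tpow_smul_mem_of_emb_smul_mem (hx : IsStdGenerator lam X x) (hlam : lam.IsMaximal)
    {N : Submodule G.A X.M} {r : R} {n : ℤ} (h : G.emb r • G.tpow n • x ∈ N)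
    (hr : (σ ^ n) r ∉ lam) : G.tpow n • x ∈ N := by
  obtain ⟨y, i, hi, hyi⟩ := hlam.exists_inv hr
  have : G.emb (1 - (σ ^ (-n)) y * r) • G.tpow n • x = 0 := by
    rw [hx.emb_smul_tpow_smul_eq_zero_iff, map_sub, map_one, map_mul, zpow_apply_zpow_neg_apply,
      ← hyi, add_sub_cancel_left]
    exact hi
  rw [map_sub, map_one, sub_smul, one_smul, sub_eq_zero, map_mul, mul_smul] at this
  rw [this]
  exact N.smul_mem _ h

theorem tpow_smul_mem_of_mem_of_ne_zero (hx : IsStdGenerator lam X x) (hlam : lam.IsMaximal)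
    {N : Submodule G.A X.M} {n : ℤ} {m : X.M} (hm : m ∈ X.deg n) (hmN : m ∈ N) (hm0 : m ≠ 0) :
    G.tpow n • x ∈ N := by
  obtain ⟨r, rfl⟩ := hx.exists_eq_emb_smul_tpow_smul hm
  exact hx.tpow_smul_mem_of_emb_smul_mem hlam hmN
    fun hr => hm0 ((hx.emb_smul_tpow_smul_eq_zero_iff r n).mpr hr)

theorem le_of_forall_tpow_smul_mem (hx : IsStdGenerator lam X x) (hlam : lam.IsMaximal)
    {N N' : Submodule G.A X.M} (hN : IsGradedSub X N)
    (h : ∀ n : ℤ, G.tpow n • x ∈ N → G.tpow n • x ∈ N') : N ≤ N' := by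
  intro m hm
  obtain ⟨s, g, hg, hgN, rfl⟩ := hN m hm
  refine N'.sum_mem fun i _ => ?_
  by_cases hgi : g i = 0
  · rw [hgi]
    exact N'.zero_mem
  obtain ⟨r, hr⟩ := hx.exists_eq_emb_smul_tpow_smul (hg i)
  rw [hr]
  exact N'.smul_mem _ (h i (hx.tpow_smul_mem_of_mem_of_ne_zero hlam (hg i) (hgN i) hgi))

theorem tpow_smul_mem_of_mul_eq (hx : IsStdGenerator lam X x) (hlam : lam.IsMaximal)
    {N : Submodule G.A X.M} {d k m : ℤ} {p : R}
    (hp : G.tpow d * G.tpow k = G.tpow m * G.emb p) (hpl : p ∉ lam)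
    (hk : G.tpow k • x ∈ N) : G.tpow m • x ∈ N := by
  refine hx.tpow_smul_mem_of_emb_smul_mem hlam (r := (σ ^ (-m)) p) ?_
    (by rwa [zpow_apply_zpow_neg_apply])
  rw [← mul_smul, ← G.tpow_mul_emb, ← hp, mul_smul]
  exact N.smul_mem _ hk

theorem tpow_smul_not_mem_span (hx : IsStdGenerator lam X x) (hlam : lam ≠ ⊤)
    {d k m : ℤ} {p : R} (hdkm : d + k = m)
    (hp : G.tpow d * G.tpow k = G.tpow m * G.emb p) (hpl : p ∈ lam) :
    G.tpow m • x ∉ Submodule.span G.A {G.tpow k • x} := by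
  intro h
  obtain ⟨c, hc⟩ := Submodule.mem_span_singleton.mp h
  apply hx.tpow_smul_ne_zero hlam m
  rw [← decompose_of_mem_same X.deg (hx.tpow_smul_mem m), ← hc,
    X.decompose_smul_of_mem (hx.tpow_smul_mem k), ← hdkm, add_sub_cancel_right,
    G.decompose_eq_emb_coeff_mul_tpow, mul_smul, ← mul_smul (G.tpow d), hp, G.tpow_mul_emb,
    mul_smul, ← mul_smul, ← map_mul, hx.emb_smul_tpow_smul_eq_zero_iff, map_mul,
    zpow_apply_zpow_neg_apply]
  exact lam.mul_mem_left _ hpl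

theorem tp_pow_smul_mem_iff (hx : IsStdGenerator lam X x) (hlam : lam.IsMaximal)
    {N : Submodule G.A X.M} (a b : ℕ)
    (hv : ∀ j ∈ Finset.Ioc b (b + a), (σ ^ (j : ℤ)) v ∉ lam) :
    G.tp ^ (b + a) • x ∈ N ↔ G.tp ^ b • x ∈ N := by
  have := hlam.isPrime
  have hp := G.tm_pow_mul_tp_pow a b
  refine ⟨fun h => ?_, fun h => by rw [add_comm, pow_add, mul_smul]; exact N.smul_mem _ h⟩
  simp only [← G.tpow_natCast, ← G.tpow_neg_natCast] at hp h ⊢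
  exact hx.tpow_smul_mem_of_mul_eq hlam hp (by simpa [Ideal.IsPrime.prod_mem_iff] using hv) h

theorem tm_pow_smul_mem_iff (hx : IsStdGenerator lam X x) (hlam : lam.IsMaximal)
    {N : Submodule G.A X.M} (a b : ℕ)
    (hv : ∀ j ∈ Finset.Ico b (b + a), (σ ^ (-(j : ℤ))) v ∉ lam) :
    G.tm ^ (b + a) • x ∈ N ↔ G.tm ^ b • x ∈ N := by
  have := hlam.isPrime
  have hp := G.tp_pow_mul_tm_pow a b
  refine ⟨fun h => ?_, fun h => by rw [add_comm, pow_add, mul_smul]; exact N.smul_mem _ h⟩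
  simp only [← G.tpow_natCast, ← G.tpow_neg_natCast] at hp h ⊢
  exact hx.tpow_smul_mem_of_mul_eq hlam hp (by simpa [Ideal.IsPrime.prod_mem_iff] using hv) h

theorem tp_pow_smul_not_mem_span (hx : IsStdGenerator lam X x) (hlam : lam ≠ ⊤) (a b : ℕ)
    {j : ℕ} (hj : j ∈ Finset.Ioc b (b + a)) (hjv : (σ ^ (j : ℤ)) v ∈ lam) :
    G.tp ^ b • x ∉ Submodule.span G.A {G.tp ^ (b + a) • x} := by
  have hp := G.tm_pow_mul_tp_pow a b
  simp only [← G.tpow_natCast, ← G.tpow_neg_natCast] at hp ⊢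
  exact hx.tpow_smul_not_mem_span hlam (by push_cast; ring) hp
    (Ideal.mem_of_dvd _ (Finset.dvd_prod_of_mem _ hj) hjv)

theorem tm_pow_smul_not_mem_span (hx : IsStdGenerator lam X x) (hlam : lam ≠ ⊤) (a b : ℕ)
    {j : ℕ} (hj : j ∈ Finset.Ico b (b + a)) (hjv : (σ ^ (-(j : ℤ))) v ∈ lam) :
    G.tm ^ b • x ∉ Submodule.span G.A {G.tm ^ (b + a) • x} := by
  have hp := G.tp_pow_mul_tm_pow a b
  simp only [← G.tpow_natCast, ← G.tpow_neg_natCast] at hp ⊢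
  exact hx.tpow_smul_not_mem_span hlam (by push_cast; ring) hp
    (Ideal.mem_of_dvd _ (Finset.dvd_prod_of_mem _ hj) hjv)

theorem isSimpleGr (hx : IsStdGenerator lam X x) (hlam : lam.IsMaximal)
    (hv : ∀ n : ℤ, (σ ^ n) v ∉ lam) : IsSimpleGr X := by
  refine ⟨⟨x, by simpa [G.tpow_zero] using hx.tpow_smul_ne_zero hlam.ne_top 0⟩,
    fun N hN => or_iff_not_imp_left.mpr fun hbot => ?_⟩
  obtain ⟨n, hn⟩ : ∃ n : ℤ, G.tpow n • x ∈ N := by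
    by_contra! h
    exact hbot (eq_bot_iff.mpr (hx.le_of_forall_tpow_smul_mem hlam hN fun n hn => (h n hn).elim))
  have hxN : x ∈ N := by
    obtain ⟨n, rfl | rfl⟩ := Int.eq_nat_or_neg n
    · simpa using (hx.tp_pow_smul_mem_iff hlam n 0 fun j _ => hv j).mp (by simpa using hn)
    · simpa using (hx.tm_pow_smul_mem_iff hlam n 0 fun j _ => hv _).mp (by simpa using hn)
  rw [eq_top_iff, ← hx.span_eq_top, Submodule.span_le, Set.singleton_subset_iff]
  exact hxN

theorem not_isSimpleGr (hx : IsStdGenerator lam X x) (hlam : lam ≠ ⊤) {k : ℤ}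
    (hk : (σ ^ k) v ∈ lam) : ¬ IsSimpleGr X := by
  rcases le_or_gt k 0 with hk0 | hk0
  · obtain ⟨a, rfl⟩ := Int.exists_eq_neg_ofNat hk0
    refine GradedMod.not_isSimpleGr_of_span_singleton_ne_top (hx.tm_pow_smul_mem (a + 1))
      (by rw [← G.tpow_neg_natCast]; exact hx.tpow_smul_ne_zero hlam _) fun h => ?_
    refine hx.tm_pow_smul_not_mem_span hlam (a + 1) 0 (j := a) (by simp) hk ?_
    simp [h]
  · obtain ⟨a, rfl⟩ := Int.eq_ofNat_of_zero_le hk0.le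
    refine GradedMod.not_isSimpleGr_of_span_singleton_ne_top (hx.tp_pow_smul_mem a)
      (hx.tpow_smul_ne_zero hlam a) fun h => ?_
    refine hx.tp_pow_smul_not_mem_span hlam a 0 (j := a) (by simp; omega) hk ?_
    simp [h]

theorem not_isArtinianGr_of_infinite_pos (hx : IsStdGenerator lam X x) (hlam : lam ≠ ⊤)
    (hinf : {n : ℕ | (σ ^ (n : ℤ)) v ∈ lam}.Infinite) : ¬ IsArtinianGr X := by
  obtain ⟨k, hk, hkv⟩ : ∃ k : ℕ → ℕ, StrictMono k ∧ ∀ i, (σ ^ (k i : ℤ)) v ∈ lam :=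
    ⟨_, Nat.nth_strictMono hinf, Nat.nth_mem_of_infinite hinf⟩
  refine GradedMod.not_isArtinianGr_of_strictAnti
    (f := fun i => Submodule.span G.A {G.tp ^ k i • x})
    (fun i => X.isGradedSub_span_singleton (hx.tp_pow_smul_mem (k i)))
    (strictAnti_nat_of_succ_lt fun i => ?_)
  obtain ⟨d, hd⟩ := Nat.exists_eq_add_of_lt (hk i.lt_succ_self)
  have hkv' := hkv (i + 1)
  rw [hd, add_assoc] at hkv' ⊢
  refine lt_of_le_of_ne ?_ fun h => hx.tp_pow_smul_not_mem_span hlam (d + 1) (k i) ?_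
    hkv' (h ▸ Submodule.mem_span_singleton_self _)
  · rw [Submodule.span_singleton_le_iff_mem, add_comm (k i), pow_add G.tp (d + 1), mul_smul]
    exact Submodule.smul_mem _ _ (Submodule.mem_span_singleton_self _)
  · simp [← add_assoc]

theorem not_isArtinianGr_of_infinite_neg (hx : IsStdGenerator lam X x) (hlam : lam ≠ ⊤)
    (hinf : {n : ℕ | (σ ^ (-(n : ℤ))) v ∈ lam}.Infinite) : ¬ IsArtinianGr X := by
  obtain ⟨k, hk, hkv⟩ : ∃ k : ℕ → ℕ, StrictMono k ∧ ∀ i, (σ ^ (-(k i : ℤ))) v ∈ lam :=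
    ⟨_, Nat.nth_strictMono hinf, Nat.nth_mem_of_infinite hinf⟩
  refine GradedMod.not_isArtinianGr_of_strictAnti
    (f := fun i => Submodule.span G.A {G.tm ^ (k i + 1) • x})
    (fun i => X.isGradedSub_span_singleton (hx.tm_pow_smul_mem (k i + 1)))
    (strictAnti_nat_of_succ_lt fun i => ?_)
  obtain ⟨d, hd⟩ := Nat.exists_eq_add_of_lt (hk i.lt_succ_self)
  have hkv' := hkv (i + 1)
  rw [hd] at hkv' ⊢
  rw [show k i + d + 1 + 1 = k i + 1 + (d + 1) by omega]
  refine lt_of_le_of_ne ?_ fun h => hx.tm_pow_smul_not_mem_span hlam (d + 1) (k i + 1) ?_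
    hkv' (h ▸ Submodule.mem_span_singleton_self _)
  · rw [Submodule.span_singleton_le_iff_mem, add_comm (k i + 1), pow_add G.tm (d + 1), mul_smul]
    exact Submodule.smul_mem _ _ (Submodule.mem_span_singleton_self _)
  · simp
    omega

theorem tpow_smul_mem_of_forall_mem_Icc (hx : IsStdGenerator lam X x) (hlam : lam.IsMaximal)
    {K : ℕ} (hK : ∀ n ∈ chiSet σ v lam, n.natAbs < K) {N N' : Submodule G.A X.M}
    (h : ∀ n ∈ Set.Icc (-K : ℤ) K, G.tpow n • x ∈ N → G.tpow n • x ∈ N') (n : ℤ)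
    (hn : G.tpow n • x ∈ N) : G.tpow n • x ∈ N' := by
  by_cases hnK : n ∈ Set.Icc (-K : ℤ) K
  · exact h n hnK hn
  rcases le_or_gt 0 n with hn0 | hn0
  · obtain ⟨a, rfl⟩ : ∃ a : ℕ, n = (K + a : ℕ) := ⟨n.toNat - K, by simp at hnK; omega⟩
    have hv : ∀ j ∈ Finset.Ioc K (K + a), (σ ^ (j : ℤ)) v ∉ lam := fun j hj hjv => by
      have := hK j hjv
      simp at hj
      omega
    simp only [G.tpow_natCast] at hn ⊢
    rw [hx.tp_pow_smul_mem_iff hlam a K hv] at hn ⊢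
    exact h K (by simp) hn
  · obtain ⟨a, rfl⟩ : ∃ a : ℕ, n = -(K + a : ℕ) := ⟨(-n).toNat - K, by simp at hnK; omega⟩
    have hv : ∀ j ∈ Finset.Ico K (K + a), (σ ^ (-(j : ℤ))) v ∉ lam := fun j hj hjv => by
      have := hK _ hjv
      simp at hj
      omega
    simp only [G.tpow_neg_natCast] at hn ⊢
    rw [hx.tm_pow_smul_mem_iff hlam a K hv] at hn ⊢
    simpa using h (-K) (by simp) (by simpa using hn)

theorem isArtinianGr (hx : IsStdGenerator lam X x) (hlam : lam.IsMaximal)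
    (hfin : (chiSet σ v lam).Finite) : IsArtinianGr X := by
  obtain ⟨K, hK⟩ : ∃ K : ℕ, ∀ n ∈ chiSet σ v lam, n.natAbs < K :=
    let ⟨B, hB⟩ := (hfin.image Int.natAbs).bddAbove
    ⟨B + 1, fun n hn => Nat.lt_succ_of_le (hB ⟨n, hn, rfl⟩)⟩
  intro f hgr hf
  have hanti : Antitone f := antitone_nat_of_succ_le hf
  let inWindow (i : ℕ) : Set (Set.Icc (-K : ℤ) K) := {n | G.tpow n • x ∈ f i}
  obtain ⟨i, hi⟩ := WellFoundedLT.antitone_chain_condition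
    (f := inWindow) fun i j hij n hn => hanti hij hn
  refine ⟨i, fun j hij => le_antisymm (hanti hij) (hx.le_of_forall_tpow_smul_mem hlam (hgr i)
    (hx.tpow_smul_mem_of_forall_mem_Icc hlam hK fun n hn hni => ?_))⟩
  exact (hi j hij ▸ hni : (⟨n, hn⟩ : Set.Icc _ _) ∈ inWindow j)

end IsStdGenerator

theorem chiSet_subset_union (σ : R ≃ₐ[ℂ] R) (v : R) (lam : Ideal R) :
    chiSet σ v lam ⊆ ((↑) '' {n : ℕ | (σ ^ (n : ℤ)) v ∈ lam}) ∪
      ((fun n : ℕ => -(n : ℤ)) '' {n : ℕ | (σ ^ (-(n : ℤ))) v ∈ lam}) := by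
  intro k hk
  obtain ⟨n, rfl | rfl⟩ := Int.eq_nat_or_neg k
  · exact Or.inl ⟨n, hk, rfl⟩
  · exact Or.inr ⟨n, hk, rfl⟩

theorem stmt1_general {R : Type} [CommRing R] [Algebra ℂ R]
    {σ : R ≃ₐ[ℂ] R} {v : R} (G : GWA R σ v)
    (lam : Ideal R) (hlam : lam.IsMaximal)
    (X : GradedMod G) (hX : IsStdMod G lam X) :
    (IsArtinianGr X ↔ (chiSet σ v lam).Finite) ∧
    (IsSimpleGr X ↔ chiSet σ v lam = ∅) ∧
    (IsSimpleGr X ↔ ∀ n : ℤ, (σ ^ n) v ∉ lam) := by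
  obtain ⟨x, hx0, hspan, hann⟩ := hX
  have hx : IsStdGenerator lam X x := ⟨hx0, hspan, hann⟩
  have hsimple : IsSimpleGr X ↔ ∀ n : ℤ, (σ ^ n) v ∉ lam :=
    ⟨fun h _ hn => hx.not_isSimpleGr hlam.ne_top hn h, hx.isSimpleGr hlam⟩
  refine ⟨⟨fun h => ?_, hx.isArtinianGr hlam⟩,
    hsimple.trans Set.eq_empty_iff_forall_notMem.symm, hsimple⟩
  have hpos := Set.not_infinite.mp fun hinf =>
    hx.not_isArtinianGr_of_infinite_pos hlam.ne_top hinf h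
  have hneg := Set.not_infinite.mp fun hinf =>
    hx.not_isArtinianGr_of_infinite_neg hlam.ne_top hinf h
  exact ((hpos.image _).union (hneg.image _)).subset (chiSet_subset_union σ v lam)

/-- `A^λ` is Artinian iff `χ_λ` is finite, and simple iff `χ_λ = ∅`,
equivalently iff `λ ∉ Z^σ`. -/
theorem stmt1 {R : Type} [CommRing R] [Algebra ℂ R] (hfg : Algebra.FiniteType ℂ R)
    {σ : R ≃ₐ[ℂ] R} {v : R} (G : GWA R σ v)
    (lam : Ideal R) (hlam : lam.IsMaximal)
    (X : GradedMod G) (hX : IsStdMod G lam X) :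
    (IsArtinianGr X ↔ (chiSet σ v lam).Finite) ∧
    (IsSimpleGr X ↔ chiSet σ v lam = ∅) ∧
    (IsSimpleGr X ↔ ∀ n : ℤ, (σ ^ n) v ∉ lam) :=
  stmt1_general G lam hlam X hX
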